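/- Let the activation be h-smoothly approximately ReLU (for some h > 0). Let V = (V_1,…,V_{L+1}) and W = (W_1,…,W_{L+1}) be weight tuples and ℓ ∈ {1,…,L+1} such that V_j = W_j for all j ≠ ℓ, with ‖V_ℓ − W_ℓ‖_op·‖V‖^{L+1} ≤ 1 and ‖V‖, ‖W‖ > √(L + 1/2). Fix an example s and suppose that for every convex combination W̃ of V and W one has J_s(W̃) ≤ 2·J_s(V). Then |g_s(V) − g_s(W)| ≤ 2·J_s(V)·‖V_ℓ − W_ℓ‖_op·‖V‖^{L+1}. -/

import Mathlib

open scoped BigOperators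
noncomputable section

abbrev Params (L p : ℕ) := EuclideanSpace ℝ ((Fin L × Fin p × Fin p) ⊕ Fin p)

def layerMat {L p : ℕ} (w : Params L p) (ℓ : Fin L) : Matrix (Fin p) (Fin p) ℝ :=
  Matrix.of fun i j => w (Sum.inl (ℓ, i, j))

def outVec {L p : ℕ} (w : Params L p) : Fin p → ℝ := fun j => w (Sum.inr j)

def SmoothApproxReLU (φ : ℝ → ℝ) (h : ℝ) : Prop :=
  Differentiable ℝ φ ∧ φ 0 = 0 ∧
    (∀ z₁ z₂ : ℝ, |deriv φ z₁ - deriv φ z₂| ≤ (1 / h) * |z₁ - z₂|) ∧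
    (∀ z : ℝ, |deriv φ z| ≤ 1) ∧ (∀ z : ℝ, |deriv φ z * z - φ z| ≤ h / 2)

def feat {L p : ℕ} (φ : ℝ → ℝ) (w : Params L p) (x : Fin p → ℝ) : ℕ → Fin p → ℝ
  | 0 => x
  | ℓ + 1 =>
    if hl : ℓ < L then fun i => φ ((layerMat w ⟨ℓ, hl⟩).mulVec (feat φ w x ℓ) i)
    else feat φ w x ℓ

def netOut {L p : ℕ} (φ : ℝ → ℝ) (w : Params L p) (x : Fin p → ℝ) : ℝ :=
  ∑ j, outVec w j * feat φ w x L j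

def lossS {L p : ℕ} (φ : ℝ → ℝ) (x : Fin p → ℝ) (y : ℝ) (w : Params L p) : ℝ :=
  Real.log (1 + Real.exp (-(y * netOut φ w x)))

def loss {L p n : ℕ} (φ : ℝ → ℝ) (x : Fin n → Fin p → ℝ) (y : Fin n → ℝ) (w : Params L p) : ℝ :=
  (1 / (n : ℝ)) * ∑ s, lossS φ (x s) (y s) w

def enorm {p : ℕ} (v : Fin p → ℝ) : ℝ := Real.sqrt (∑ i, v i ^ 2)

def hmax (L p : ℕ) (J1 nV1 : ℝ) : ℝ :=
  min ((L : ℝ) ^ ((L : ℝ) / 2 - 3) * Real.log (1 / J1) / (24 * Real.sqrt p * nV1 ^ L)) 1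

def alphaMax (L p : ℕ) (J1 nV1 h : ℝ) : ℝ :=
  min (h / (1024 * ((L : ℝ) + 1) ^ 2 * p * J1 * nV1 ^ (3 * L + 5)))
    (((L : ℝ) + 1 / 2) * nV1 ^ 2 /
      (2 * L * ((L : ℝ) + 3 / 4) ^ 2 * J1 * Real.log (1 / J1) ^ ((2 : ℝ) / L)))

def Qtilde (L : ℕ) (J1 nV1 α : ℝ) : ℝ :=
  (L : ℝ) * ((L : ℝ) + 3 / 4) ^ 2 * α * J1 * Real.log (1 / J1) ^ ((2 : ℝ) / L) /
    (((L : ℝ) + 1 / 2) * nV1 ^ 2)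

def lipGrad {L p : ℕ} (J : Params L p → ℝ) (v : Params L p) : ℝ :=
  Filter.limsup (fun w : Params L p => ‖gradient J v - gradient J w‖ / ‖v - w‖)
    (nhdsWithin v {v}ᶜ)

/-- Operator (ℓ²→ℓ²) norm of a real matrix. -/
def opNorm {m k : ℕ} (A : Matrix (Fin m) (Fin k) ℝ) : ℝ :=
  ‖LinearMap.toContinuousLinearMap (Matrix.toEuclideanLin A)‖

/-- Outer-layer weights viewed as a `1 × p` matrix. -/
def outMat {L p : ℕ} (w : Params L p) : Matrix (Fin 1) (Fin p) ℝ :=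
  Matrix.of fun _ j => w (Sum.inr j)

/-- Pre-activation features `u_{ℓ+1,s}^V` of the hidden layer with 0-based index `ℓ`. -/
def uFeat {L p : ℕ} (φ : ℝ → ℝ) (w : Params L p) (x : Fin p → ℝ) (ℓ : Fin L) : Fin p → ℝ :=
  (layerMat w ℓ).mulVec (feat φ w x ℓ)

/-- The diagonal matrix `Σ_{ℓ+1,s}^V = diag(φ'(u_{ℓ+1,s}^V))`. -/
def sigmaMat {L p : ℕ} (φ : ℝ → ℝ) (w : Params L p) (x : Fin p → ℝ) (ℓ : Fin L) :
    Matrix (Fin p) (Fin p) ℝ :=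
  Matrix.diagonal fun i => deriv φ (uFeat φ w x ℓ i)

/-- `g_s(V) = 1 / (1 + exp(y_s f_V(x_s)))`. -/
def gS {L p : ℕ} (φ : ℝ → ℝ) (x : Fin p → ℝ) (y : ℝ) (w : Params L p) : ℝ :=
  1 / (1 + Real.exp (y * netOut φ w x))

/-- `V` and `W` agree on every layer except possibly the one with paper index `ℓ + 1`
(`ℓ : Fin (L+1)`; the value `ℓ = L` designates the outer layer `V_{L+1}`). -/
def eqExcept {L p : ℕ} (V W : Params L p) (ℓ : Fin (L + 1)) : Prop :=
  (∀ j : Fin L, (j : ℕ) ≠ (ℓ : ℕ) → layerMat V j = layerMat W j) ∧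
    ((ℓ : ℕ) < L → outMat V = outMat W)

/-- Operator norm `‖V_ℓ - W_ℓ‖_op` of the difference at the (single) layer with paper
index `ℓ + 1`. -/
def layerOpDiff {L p : ℕ} (V W : Params L p) (ℓ : Fin (L + 1)) : ℝ :=
  if h : (ℓ : ℕ) < L then opNorm (layerMat V ⟨ℓ, h⟩ - layerMat W ⟨ℓ, h⟩)
  else opNorm (outMat V - outMat W)

/-! Changing a single layer by `Δ` moves the network output by at most `‖Δ‖_op ‖V‖ ^ L`: since
`φ` is `1`-Lipschitz with `φ 0 = 0`, every other layer multiplies a feature difference by at most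
its operator norm, which is at most its Frobenius norm and hence at most `‖V‖`; and `‖V‖ ≥ 1`
because `‖V‖ > √(L + 1/2)`. On the loss side, `g_s = σ(t)` and `J_s = log (1 + eᵗ)` for the
margin `t = -y f(x)`; since `σ (b) - σ (a) ≤ σ (b) (b - a)` for `a ≤ b` and `σ ≤ log (1 + exp)`,
`g_s` moves by at most `max (J_s V) (J_s W)` times the change of margin, and the hypothesis at
`θ = 0` gives `J_s W ≤ 2 J_s V`. -/

open scoped Matrix
open Real

section EuclideanVectors

variable {m k : ℕ}

lemma enorm_eq_norm_toLp (v : Fin m → ℝ) :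
    _root_.enorm v = ‖WithLp.toLp 2 v‖ := by
  simp only [_root_.enorm, EuclideanSpace.norm_eq, Real.norm_eq_abs, sq_abs]

lemma enorm_le_enorm_of_abs_le {v w : Fin m → ℝ} (h : ∀ i, |v i| ≤ |w i|) :
    _root_.enorm v ≤ _root_.enorm w :=
  Real.sqrt_le_sqrt <| Finset.sum_le_sum fun i _ => sq_le_sq.2 (h i)

lemma abs_le_enorm (v : Fin m → ℝ) (i : Fin m) : |v i| ≤ _root_.enorm v := by
  rw [enorm_eq_norm_toLp]
  exact PiLp.norm_apply_le (WithLp.toLp 2 v) i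

lemma enorm_mulVec_le (A : Matrix (Fin m) (Fin k) ℝ) (v : Fin k → ℝ) :
    _root_.enorm (A *ᵥ v) ≤ opNorm A * _root_.enorm v := by
  rw [enorm_eq_norm_toLp, enorm_eq_norm_toLp]
  exact (LinearMap.toContinuousLinearMap (Matrix.toEuclideanLin A)).le_opNorm (WithLp.toLp 2 v)

lemma enorm_mulVec_le_sqrt_sum_sq (A : Matrix (Fin m) (Fin k) ℝ) (v : Fin k → ℝ) :
    _root_.enorm (A *ᵥ v) ≤ √(∑ ij : Fin m × Fin k, A ij.1 ij.2 ^ 2) * _root_.enorm v := by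
  rw [_root_.enorm, _root_.enorm, ← Real.sqrt_mul (by positivity), Fintype.sum_prod_type,
    Finset.sum_mul]
  gcongr with i
  exact Finset.sum_mul_sq_le_sq_mul_sq (s := Finset.univ) (A i) v

lemma opNorm_le_sqrt_sum_sq (A : Matrix (Fin m) (Fin k) ℝ) :
    opNorm A ≤ √(∑ ij : Fin m × Fin k, A ij.1 ij.2 ^ 2) := by
  refine ContinuousLinearMap.opNorm_le_bound _ (Real.sqrt_nonneg _) fun v => ?_
  have h := enorm_mulVec_le_sqrt_sum_sq A v.ofLp
  rwa [enorm_eq_norm_toLp, enorm_eq_norm_toLp, WithLp.toLp_ofLp] at h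

lemma sqrt_sum_sq_comp_le_norm {ι κ : Type*} [Fintype ι] [Fintype κ]
    (v : EuclideanSpace ℝ κ) {e : ι → κ} (he : Function.Injective e) :
    √(∑ i, v (e i) ^ 2) ≤ ‖v‖ := by
  rw [EuclideanSpace.norm_eq]
  gcongr
  calc ∑ i, v (e i) ^ 2 = ∑ c ∈ Finset.univ.map ⟨e, he⟩, v c ^ 2 := by rw [Finset.sum_map]; rfl
    _ ≤ ∑ c, v c ^ 2 := Finset.sum_le_univ_sum_of_nonneg fun c => sq_nonneg _
    _ = ∑ c, ‖v c‖ ^ 2 := by simp only [Real.norm_eq_abs, sq_abs]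

end EuclideanVectors

section Weights

variable {L p : ℕ}

lemma opNorm_layerMat_le (V : Params L p) (k : Fin L) : opNorm (layerMat V k) ≤ ‖V‖ :=
  (opNorm_le_sqrt_sum_sq _).trans <| sqrt_sum_sq_comp_le_norm V
    (e := fun ij : Fin p × Fin p => Sum.inl (k, ij.1, ij.2)) fun a b hab => by
      simpa [Prod.ext_iff] using hab

lemma opNorm_outMat_le (V : Params L p) : opNorm (outMat V) ≤ ‖V‖ :=
  (opNorm_le_sqrt_sum_sq _).trans <| sqrt_sum_sq_comp_le_norm V
    (e := fun ij : Fin 1 × Fin p => Sum.inr ij.2) fun a b hab => by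
      simpa [Prod.ext_iff, Subsingleton.elim a.1 b.1] using hab

end Weights

lemma SmoothApproxReLU.lipschitzWith {φ : ℝ → ℝ} {h : ℝ} (hφ : SmoothApproxReLU φ h) :
    LipschitzWith 1 φ :=
  lipschitzWith_of_nnnorm_deriv_le hφ.1 fun z => by
    rw [← NNReal.coe_le_coe]
    simpa [Real.norm_eq_abs] using hφ.2.2.2.1 z

section Features

variable {L p : ℕ} {φ : ℝ → ℝ}

lemma enorm_comp_sub_comp_le (hφ : LipschitzWith 1 φ) (u v : Fin p → ℝ) :
    _root_.enorm (φ ∘ u - φ ∘ v) ≤ _root_.enorm (u - v) :=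
  enorm_le_enorm_of_abs_le fun i => by
    simpa [← Real.dist_eq] using hφ.dist_le_mul (u i) (v i)

lemma enorm_comp_le (hφ : LipschitzWith 1 φ) (hφ0 : φ 0 = 0) (u : Fin p → ℝ) :
    _root_.enorm (φ ∘ u) ≤ _root_.enorm u := by
  have h := enorm_comp_sub_comp_le hφ u 0
  rwa [show φ ∘ (0 : Fin p → ℝ) = 0 from funext fun _ => hφ0, sub_zero, sub_zero] at h

lemma feat_succ (w : Params L p) (x : Fin p → ℝ) {k : ℕ} (hk : k < L) :
    feat φ w x (k + 1) = φ ∘ (layerMat w ⟨k, hk⟩ *ᵥ feat φ w x k) := by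
  rw [feat, dif_pos hk]
  rfl

lemma enorm_feat_le (hφ : LipschitzWith 1 φ) (hφ0 : φ 0 = 0) (V : Params L p)
    (x : Fin p → ℝ) : ∀ k ≤ L, _root_.enorm (feat φ V x k) ≤ ‖V‖ ^ k * _root_.enorm x
  | 0, _ => by simp [feat]
  | k + 1, hk => by
    rw [feat_succ V x hk, pow_succ', mul_assoc]
    calc _root_.enorm (φ ∘ (layerMat V ⟨k, hk⟩ *ᵥ feat φ V x k))
        ≤ opNorm (layerMat V ⟨k, hk⟩) * _root_.enorm (feat φ V x k) :=
          (enorm_comp_le hφ hφ0 _).trans (enorm_mulVec_le _ _)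
      _ ≤ ‖V‖ * (‖V‖ ^ k * _root_.enorm x) :=
          mul_le_mul (opNorm_layerMat_le V _) (enorm_feat_le hφ hφ0 V x k (Nat.le_of_succ_le hk))
            (Real.sqrt_nonneg _) (norm_nonneg V)

lemma feat_eq_of_layerMat_eq (V W : Params L p) (x : Fin p → ℝ) :
    ∀ m, (∀ j : Fin L, (j : ℕ) < m → layerMat V j = layerMat W j) →
      feat φ V x m = feat φ W x m
  | 0, _ => rfl
  | m + 1, hVW => by
    have ih := feat_eq_of_layerMat_eq V W x m fun j hj => hVW j (by omega)
    by_cases hm : m < L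
    · rw [feat_succ V x hm, feat_succ W x hm, ih, hVW ⟨m, hm⟩ (by simp)]
    · simp only [feat, dif_neg hm, ih]

end Features

section Perturbation

variable {L p : ℕ} {φ : ℝ → ℝ}

lemma enorm_feat_sub_feat_le (hφ : LipschitzWith 1 φ) (hφ0 : φ 0 = 0) {V W : Params L p}
    (x : Fin p → ℝ) (k : Fin L) (hVW : ∀ j : Fin L, j ≠ k → layerMat V j = layerMat W j) :
    ∀ n : ℕ, (k : ℕ) < n → n ≤ L → _root_.enorm (feat φ V x n - feat φ W x n) ≤
      opNorm (layerMat V k - layerMat W k) * ‖V‖ ^ (n - 1) * _root_.enorm x := by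
  intro n hkn
  induction n, hkn using Nat.le_induction with
  | base =>
    intro _
    have hbelow : feat φ V x k = feat φ W x k :=
      feat_eq_of_layerMat_eq V W x k fun j hj => hVW j (Fin.ne_of_lt hj)
    rw [feat_succ V x k.2, feat_succ W x k.2, ← hbelow, Nat.succ_sub_one, mul_assoc]
    calc _root_.enorm (φ ∘ (layerMat V k *ᵥ feat φ V x k) - φ ∘ (layerMat W k *ᵥ feat φ V x k))
        ≤ _root_.enorm ((layerMat V k - layerMat W k) *ᵥ feat φ V x k) := by
          rw [Matrix.sub_mulVec]
          exact enorm_comp_sub_comp_le hφ _ _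
      _ ≤ _ := (enorm_mulVec_le _ _).trans <|
          mul_le_mul_of_nonneg_left (enorm_feat_le hφ hφ0 V x k k.2.le) (norm_nonneg _)
  | succ n hkn ih =>
    intro hnL
    have hn : n < L := hnL
    have hlayer : layerMat V ⟨n, hn⟩ = layerMat W ⟨n, hn⟩ :=
      hVW _ fun h => by simp [← h] at hkn
    have hpow : ‖V‖ ^ n = ‖V‖ * ‖V‖ ^ (n - 1) := by rw [← pow_succ', Nat.sub_add_cancel (by omega)]
    rw [feat_succ V x hn, feat_succ W x hn, ← hlayer, Nat.add_sub_cancel, hpow]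
    calc _root_.enorm (φ ∘ (layerMat V ⟨n, hn⟩ *ᵥ feat φ V x n)
          - φ ∘ (layerMat V ⟨n, hn⟩ *ᵥ feat φ W x n))
        ≤ opNorm (layerMat V ⟨n, hn⟩) * _root_.enorm (feat φ V x n - feat φ W x n) := by
          refine (enorm_comp_sub_comp_le hφ _ _).trans ?_
          rw [← Matrix.mulVec_sub]
          exact enorm_mulVec_le _ _
      _ ≤ ‖V‖ * (opNorm (layerMat V k - layerMat W k) * ‖V‖ ^ (n - 1) * _root_.enorm x) :=
          mul_le_mul (opNorm_layerMat_le V _) (ih hn.le) (Real.sqrt_nonneg _) (norm_nonneg V)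
      _ = _ := by ring

lemma netOut_eq_outMat_mulVec (w : Params L p) (x : Fin p → ℝ) :
    netOut φ w x = (outMat w *ᵥ feat φ w x L) 0 :=
  rfl

lemma abs_netOut_sub_netOut_le (hφ : LipschitzWith 1 φ) (hφ0 : φ 0 = 0) {V W : Params L p}
    (x : Fin p → ℝ) {ℓ : Fin (L + 1)} (hVW : eqExcept V W ℓ) :
    |netOut φ V x - netOut φ W x| ≤ layerOpDiff V W ℓ * ‖V‖ ^ L * _root_.enorm x := by
  rw [netOut_eq_outMat_mulVec, netOut_eq_outMat_mulVec, ← Pi.sub_apply]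
  refine (abs_le_enorm _ 0).trans ?_
  by_cases hℓ : (ℓ : ℕ) < L
  · have hpow : ‖V‖ ^ L = ‖V‖ * ‖V‖ ^ (L - 1) := by
      rw [← pow_succ', Nat.sub_add_cancel (by omega)]
    rw [layerOpDiff, dif_pos hℓ, ← hVW.2 hℓ, ← Matrix.mulVec_sub, hpow]
    calc _root_.enorm (outMat V *ᵥ (feat φ V x L - feat φ W x L))
        ≤ opNorm (outMat V) * _root_.enorm (feat φ V x L - feat φ W x L) := enorm_mulVec_le _ _
      _ ≤ ‖V‖ * (opNorm (layerMat V ⟨ℓ, hℓ⟩ - layerMat W ⟨ℓ, hℓ⟩) * ‖V‖ ^ (L - 1)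
            * _root_.enorm x) :=
          mul_le_mul (opNorm_outMat_le V)
            (enorm_feat_sub_feat_le hφ hφ0 x ⟨ℓ, hℓ⟩ (fun j hj => hVW.1 j fun h => hj (Fin.ext h)) L
              hℓ le_rfl) (Real.sqrt_nonneg _) (norm_nonneg V)
      _ = _ := by ring
  · have hfeat : feat φ V x L = feat φ W x L :=
      feat_eq_of_layerMat_eq V W x L fun j hj => hVW.1 j (by omega)
    rw [layerOpDiff, dif_neg hℓ, ← hfeat, ← Matrix.sub_mulVec, mul_assoc]
    exact (enorm_mulVec_le _ _).trans <|
      mul_le_mul_of_nonneg_left (enorm_feat_le hφ hφ0 V x L le_rfl) (norm_nonneg _)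

end Perturbation

lemma sigmoid_le_log_one_add_exp (t : ℝ) : sigmoid t ≤ log (1 + exp t) := by
  have hlog : log (1 + exp t) = -log (sigmoid (-t)) := by
    rw [sigmoid_def, neg_neg, Real.log_inv, neg_neg]
  linarith [Real.log_le_sub_one_of_pos (sigmoid_pos (-t)), sigmoid_neg t]

lemma sigmoid_sub_sigmoid_le_mul {a b : ℝ} (hab : a ≤ b) :
    sigmoid b - sigmoid a ≤ sigmoid b * (b - a) := by
  -- `σ b - σ a = σ a σ b (e⁻ᵃ - e⁻ᵇ)` and `σ a e⁻ᵃ = σ (-a) ≤ 1`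
  have hid : sigmoid b - sigmoid a = sigmoid b * (sigmoid (-a) * (1 - exp (a - b))) := by
    rw [← sigmoid_mul_rexp_neg, sigmoid_def, sigmoid_def, Real.exp_sub, Real.exp_neg, Real.exp_neg]
    field_simp
    ring
  have hexp : exp (a - b) ≤ 1 := Real.exp_le_one_iff.2 (by linarith)
  rw [hid]
  gcongr
  · exact (sigmoid_pos b).le
  calc sigmoid (-a) * (1 - exp (a - b)) ≤ 1 * (1 - exp (a - b)) :=
        mul_le_mul_of_nonneg_right (sigmoid_le_one _) (by linarith)
    _ ≤ b - a := by linarith [add_one_le_exp (a - b)]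

lemma abs_sigmoid_sub_sigmoid_le (a b : ℝ) :
    |sigmoid a - sigmoid b| ≤ max (log (1 + exp a)) (log (1 + exp b)) * |a - b| := by
  wlog hab : a ≤ b generalizing a b
  · rw [abs_sub_comm, max_comm, abs_sub_comm a]
    exact this b a (le_of_not_ge hab)
  rw [abs_sub_comm, abs_of_nonneg (sub_nonneg.2 (sigmoid_le hab)), abs_sub_comm,
    abs_of_nonneg (sub_nonneg.2 hab)]
  exact (sigmoid_sub_sigmoid_le_mul hab).trans <| mul_le_mul_of_nonneg_right
    ((sigmoid_le_log_one_add_exp b).trans (le_max_right _ _)) (sub_nonneg.2 hab)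

lemma gS_eq_sigmoid {L p : ℕ} (φ : ℝ → ℝ) (x : Fin p → ℝ) (y : ℝ) (w : Params L p) :
    gS φ x y w = sigmoid (-(y * netOut φ w x)) := by
  rw [gS, sigmoid_def, neg_neg, one_div]

lemma lossS_nonneg {L p : ℕ} (φ : ℝ → ℝ) (x : Fin p → ℝ) (y : ℝ) (w : Params L p) :
    0 ≤ lossS φ x y w :=
  Real.log_nonneg (by linarith [exp_pos (-(y * netOut φ w x))])

lemma layerOpDiff_nonneg {L p : ℕ} (V W : Params L p) (ℓ : Fin (L + 1)) :
    0 ≤ layerOpDiff V W ℓ := by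
  unfold layerOpDiff
  split <;> exact norm_nonneg _

theorem statement16_general
    (L p : ℕ) (hL : 1 ≤ L)
    (φ : ℝ → ℝ) (h : ℝ) (hφ : SmoothApproxReLU φ h)
    (x : Fin p → ℝ) (hx : _root_.enorm x = 1) (y : ℝ) (hy : y = 1 ∨ y = -1)
    (V W : Params L p) (ℓ : Fin (L + 1)) (hdiff : eqExcept V W ℓ)
    (hV : Real.sqrt ((L : ℝ) + 1 / 2) < ‖V‖)
    (hconv : ∀ θ : ℝ, θ ∈ Set.Icc (0 : ℝ) 1 →
      lossS φ x y (θ • V + (1 - θ) • W) ≤ 2 * lossS φ x y V) :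
    |gS φ x y V - gS φ x y W| ≤
      2 * lossS φ x y V * layerOpDiff V W ℓ * ‖V‖ ^ (L + 1) := by
  have hV1 : 1 ≤ ‖V‖ := by
    refine le_trans ?_ hV.le
    rw [Real.one_le_sqrt]
    linarith [show (1 : ℝ) ≤ L by exact_mod_cast hL]
  have hnet : |netOut φ V x - netOut φ W x| ≤ layerOpDiff V W ℓ * ‖V‖ ^ (L + 1) := by
    have h := abs_netOut_sub_netOut_le hφ.lipschitzWith hφ.2.1 x hdiff
    rw [hx, mul_one] at h
    exact h.trans (mul_le_mul_of_nonneg_left (pow_le_pow_right₀ hV1 L.le_succ)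
      (layerOpDiff_nonneg V W ℓ))
  have hJW : lossS φ x y W ≤ 2 * lossS φ x y V := by
    simpa using hconv 0 ⟨le_rfl, zero_le_one⟩
  have hmargin : |-(y * netOut φ V x) - -(y * netOut φ W x)| = |netOut φ V x - netOut φ W x| := by
    rw [neg_sub_neg, ← mul_sub, abs_mul, abs_sub_comm]
    rcases hy with rfl | rfl <;> simp
  rw [gS_eq_sigmoid, gS_eq_sigmoid, mul_assoc _ (layerOpDiff V W ℓ)]
  refine (abs_sigmoid_sub_sigmoid_le _ _).trans ?_
  rw [hmargin]
  exact mul_le_mul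
    (max_le (show lossS φ x y V ≤ _ by linarith [lossS_nonneg φ x y V]) hJW) hnet (abs_nonneg _)
    (by linarith [lossS_nonneg φ x y V])

/-- Lemma `l:g_lipschitz`: Lipschitz-type bound on `g_s` when a single
layer of the weights is changed. -/
theorem statement16
    (L p : ℕ) (hL : 1 ≤ L) (hp : 1 ≤ p)
    (φ : ℝ → ℝ) (h : ℝ) (hh0 : 0 < h) (hφ : SmoothApproxReLU φ h)
    (x : Fin p → ℝ) (hx : _root_.enorm x = 1) (y : ℝ) (hy : y = 1 ∨ y = -1)
    (V W : Params L p) (ℓ : Fin (L + 1)) (hdiff : eqExcept V W ℓ)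
    (hsmall : layerOpDiff V W ℓ * ‖V‖ ^ (L + 1) ≤ 1)
    (hV : Real.sqrt ((L : ℝ) + 1 / 2) < ‖V‖) (hW : Real.sqrt ((L : ℝ) + 1 / 2) < ‖W‖)
    (hconv : ∀ θ : ℝ, θ ∈ Set.Icc (0 : ℝ) 1 →
      lossS φ x y (θ • V + (1 - θ) • W) ≤ 2 * lossS φ x y V) :
    |gS φ x y V - gS φ x y W| ≤
      2 * lossS φ x y V * layerOpDiff V W ℓ * ‖V‖ ^ (L + 1) :=
  statement16_general L p hL φ h hφ x hx y hy V W ℓ hdiff hV hconv
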